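/- arXiv:2403.13624 — 6 statements merged into one kernel-verified Lean document; each statement's English description precedes it below -/
import Mathlib

section
/- Let (vᵢ)_{i∈I} be a family of vectors in a Hilbert space H such that for every choice of signs εᵢ = ±1 the sum Σᵢ εᵢ vᵢ converges unconditionally. Then sup over all sign choices of ‖Σᵢ εᵢ vᵢ‖² is at least Σᵢ ‖vᵢ‖². -/
/-!
The signs are chosen greedily. By the parallelogram law one of `u + w`, `u - w` has squared
norm at least `‖u‖² + ‖w‖²`. Given a finite set `s` of indices, fix the signs off `s` to be `+1`
and start from the tail `∑_{i ∉ s} vᵢ`; adding the `vᵢ`, `i ∈ s`, one at a time with the better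
sign yields a sign choice with `‖∑ εᵢ vᵢ‖² ≥ ∑_{i ∈ s} ‖vᵢ‖²`. The supremum over `s` of the
right-hand side is `∑ ‖vᵢ‖²`.
-/

open scoped ENNReal NNReal

section SignChoice

variable {E ι : Type*} [NormedAddCommGroup E]

theorem norm_sq_add_norm_sq_le_max (𝕜 : Type*) [RCLike 𝕜] [InnerProductSpace 𝕜 E] (u w : E) :
    ‖u‖ ^ 2 + ‖w‖ ^ 2 ≤ max (‖u + w‖ ^ 2) (‖u - w‖ ^ 2) := by
  have hpar := parallelogram_law_with_norm 𝕜 u w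
  rcases le_total (‖u - w‖ ^ 2) (‖u + w‖ ^ 2) with h | h
  · rw [max_eq_left h]; nlinarith
  · rw [max_eq_right h]; nlinarith

theorem exists_sign_norm_sq_add_norm_sq_le (𝕜 : Type*) [RCLike 𝕜] [InnerProductSpace 𝕜 E]
    [Module ℝ E] (u w : E) :
    ∃ δ : ℝ, (δ = 1 ∨ δ = -1) ∧ ‖u‖ ^ 2 + ‖w‖ ^ 2 ≤ ‖u + δ • w‖ ^ 2 := by
  rcases le_max_iff.mp (norm_sq_add_norm_sq_le_max 𝕜 u w) with h | h
  · exact ⟨1, Or.inl rfl, by rwa [one_smul]⟩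
  · exact ⟨-1, Or.inr rfl, by rwa [neg_one_smul, ← sub_eq_add_neg]⟩

theorem exists_signs_sum_norm_sq_add_norm_sq_le (𝕜 : Type*) [RCLike 𝕜] [InnerProductSpace 𝕜 E]
    [Module ℝ E] (v : ι → E) (s : Finset ι) (u : E) : ∃ δ : ι → ℝ, (∀ i, δ i = 1 ∨ δ i = -1) ∧
      ∑ i ∈ s, ‖v i‖ ^ 2 + ‖u‖ ^ 2 ≤ ‖u + ∑ i ∈ s, δ i • v i‖ ^ 2 := by
  classical
  induction s using Finset.induction_on generalizing u with
  | empty => exact ⟨fun _ => 1, fun _ => Or.inl rfl, by simp⟩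
  | @insert j s hj ih =>
    obtain ⟨δj, hδj, hu⟩ := exists_sign_norm_sq_add_norm_sq_le 𝕜 u (v j)
    obtain ⟨δ, hδ, hs⟩ := ih (u + δj • v j)
    refine ⟨Function.update δ j δj, fun i => ?_, ?_⟩
    · rcases eq_or_ne i j with rfl | hij
      · simpa using hδj
      · simpa [Function.update_of_ne hij] using hδ i
    · have hsum : ∑ i ∈ s, Function.update δ j δj i • v i = ∑ i ∈ s, δ i • v i :=
        Finset.sum_congr rfl fun i hi => by
          rw [Function.update_of_ne (ne_of_mem_of_not_mem hi hj)]
      rw [Finset.sum_insert hj, Finset.sum_insert hj, Function.update_self, hsum, ← add_assoc]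
      linarith

end SignChoice

theorem exists_signs_sum_norm_sq_le_norm_tsum_sq (𝕜 : Type*) {E ι : Type*} [RCLike 𝕜]
    [NormedAddCommGroup E] [InnerProductSpace 𝕜 E] [Module ℝ E] (v : ι → E)
    (hconv : ∀ ε : ι → ℝ, (∀ i, ε i = 1 ∨ ε i = -1) → Summable (fun i => ε i • v i))
    (s : Finset ι) : ∃ ε : ι → ℝ, (∀ i, ε i = 1 ∨ ε i = -1) ∧
      ∑ i ∈ s, ‖v i‖ ^ 2 ≤ ‖∑' i, ε i • v i‖ ^ 2 := by
  classical
  obtain ⟨δ, hδ, hle⟩ :=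
    exists_signs_sum_norm_sq_add_norm_sq_le 𝕜 v s (∑' i : ↑(s : Set ι)ᶜ, v i)
  set ε := s.piecewise δ 1
  have hε : ∀ i, ε i = 1 ∨ ε i = -1 := fun i => by
    by_cases hi : i ∈ s
    · simpa [ε, hi] using hδ i
    · simp [ε, hi]
  refine ⟨ε, hε, ?_⟩
  have hsplit : ∑' i, ε i • v i = (∑' i : ↑(s : Set ι)ᶜ, v i) + ∑ i ∈ s, δ i • v i := by
    rw [← (hconv ε hε).sum_add_tsum_compl, add_comm]
    congr 1
    · exact tsum_congr fun i => by
        simp [ε, Finset.piecewise_eq_of_notMem _ _ _ (Finset.mem_coe.not.mp i.2)]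
    · exact Finset.sum_congr rfl fun i hi => by simp [ε, hi]
  rw [hsplit]
  exact (le_add_of_nonneg_right (sq_nonneg _)).trans hle

theorem stmt1_general {H : Type*} [NormedAddCommGroup H] [InnerProductSpace ℂ H]
    {I : Type*} (v : I → H)
    (hconv : ∀ ε : I → ℝ, (∀ i, ε i = 1 ∨ ε i = -1) → Summable (fun i => ε i • v i)) :
    (∑' i, ((‖v i‖₊ : ℝ≥0∞) ^ 2))
      ≤ ⨆ ε : {ε : I → ℝ // ∀ i, ε i = 1 ∨ ε i = -1},
          ((‖∑' i, (ε : I → ℝ) i • v i‖₊ : ℝ≥0∞) ^ 2) := by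
  rw [ENNReal.tsum_eq_iSup_sum]
  refine iSup_le fun s => ?_
  obtain ⟨ε, hε, hle⟩ := exists_signs_sum_norm_sq_le_norm_tsum_sq ℂ v hconv s
  refine le_iSup_of_le ⟨ε, hε⟩ ?_
  simp only [← ENNReal.coe_pow, ← ENNReal.ofNNReal_finsetSum, ENNReal.coe_le_coe,
    ← NNReal.coe_le_coe]
  push_cast
  exact hle

/-- Let `(vᵢ)_{i∈I}` be a family of vectors in a Hilbert space `H` such that for every choice
of signs `εᵢ = ±1` the sum `Σᵢ εᵢ vᵢ` converges unconditionally.  Then the supremum, over all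
sign choices, of `‖Σᵢ εᵢ vᵢ‖²` is at least `Σᵢ ‖vᵢ‖²` (both sides computed in `[0,∞]`). -/
theorem stmt1 {H : Type*} [NormedAddCommGroup H] [InnerProductSpace ℂ H] [CompleteSpace H]
    {I : Type*} (v : I → H)
    (hconv : ∀ ε : I → ℝ, (∀ i, ε i = 1 ∨ ε i = -1) → Summable (fun i => ε i • v i)) :
    (∑' i, ((‖v i‖₊ : ℝ≥0∞) ^ 2))
      ≤ ⨆ ε : {ε : I → ℝ // ∀ i, ε i = 1 ∨ ε i = -1},
          ((‖∑' i, (ε : I → ℝ) i • v i‖₊ : ℝ≥0∞) ^ 2) :=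
  stmt1_general v hconv
end

section
/- Let t : H → H be a bounded operator and suppose that for all a, b ∈ B(H), t a t* t b t* = t a b t*. If t ≠ 0 in the sense that Ad(t) is a nonzero map, then t* t = 1, i.e. t is an isometry. Consequently, Ad(t) : B(H) → B(H'), s ↦ t s t*, is a nonzero *-homomorphism if and only if t is an isometry. -/
/-!
Write `P = t* t`. Multiplicativity of `Ad t` says exactly that `t a (1 - P) b t* = 0` for all
`a, b`. Testing this against rank-one operators `a, b` shows that an operator `c` with
`x a c b y = 0` for all `a, b` vanishes as soon as `x ≠ 0` and `y ≠ 0`; hence `P = 1`.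
Conversely, if `P = 1` then `t a b t* = t a P b t*`, and `Ad t 1 = t t*` is nonzero because
`(t t*) t = t ≠ 0`.
-/

open ContinuousLinearMap

variable {H H' : Type*}
  [NormedAddCommGroup H] [InnerProductSpace ℂ H] [CompleteSpace H]
  [NormedAddCommGroup H'] [InnerProductSpace ℂ H'] [CompleteSpace H']

/-- The adjoint action `Ad(t)(s) = t s t*`. -/
noncomputable def Ad (t : H →L[ℂ] H') (s : H →L[ℂ] H) : H' →L[ℂ] H' :=
  (t.comp s).comp (ContinuousLinearMap.adjoint t)

namespace ContinuousLinearMap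

theorem eq_zero_of_forall_comp_comp_comp_comp_eq_zero {𝕜 E F G : Type*} [RCLike 𝕜]
    [NormedAddCommGroup E] [InnerProductSpace 𝕜 E] [NormedAddCommGroup F] [NormedSpace 𝕜 F]
    [NormedAddCommGroup G] [NormedSpace 𝕜 G] {x : E →L[𝕜] F} {y : G →L[𝕜] E} (hx : x ≠ 0)
    (hy : y ≠ 0) {c : E →L[𝕜] E} (h : ∀ a b : E →L[𝕜] E, x ∘L a ∘L c ∘L b ∘L y = 0) :
    c = 0 := by
  obtain ⟨z, hz⟩ := DFunLike.ne_iff.mp hx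
  obtain ⟨w, hw⟩ := DFunLike.ne_iff.mp hy
  ext u
  -- With `a = |z⟩⟨c u|` and `b = |u⟩⟨y w|`, `a c b` sends `y w` to `‖y w‖² ‖c u‖² z`.
  have key := DFunLike.congr_fun
    (h ((innerSL 𝕜 (c u)).smulRight z) ((innerSL 𝕜 (y w)).smulRight u)) w
  simp only [comp_apply, smulRight_apply, innerSL_apply_apply, map_smul, smul_smul, zero_apply,
    smul_eq_zero, mul_eq_zero, inner_self_eq_zero] at key
  exact (key.resolve_right hz).resolve_left hw

end ContinuousLinearMap

theorem Ad_comp_sub_comp_Ad (t : H →L[ℂ] H') (a b : H →L[ℂ] H) :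
    Ad t (a ∘L b) - Ad t a ∘L Ad t b = t ∘L a ∘L (1 - adjoint t ∘L t) ∘L b ∘L adjoint t := by
  ext
  simp [Ad, sub_comp, comp_sub]

theorem Ad_comp_of_adjoint_comp_self {t : H →L[ℂ] H'} (ht : adjoint t ∘L t = 1)
    (a b : H →L[ℂ] H) : Ad t (a ∘L b) = Ad t a ∘L Ad t b := by
  rw [← sub_eq_zero, Ad_comp_sub_comp_Ad, ht, sub_self, zero_comp, comp_zero, comp_zero]

theorem ne_zero_and_adjoint_ne_zero_of_Ad_ne_zero {t : H →L[ℂ] H'} {s : H →L[ℂ] H}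
    (hs : Ad t s ≠ 0) : t ≠ 0 ∧ adjoint t ≠ 0 := by
  constructor <;> rintro h <;> simp [Ad, h] at hs

theorem adjoint_comp_self_eq_one_of_Ad_comp {t : H →L[ℂ] H'} {s : H →L[ℂ] H} (hs : Ad t s ≠ 0)
    (hmul : ∀ a b : H →L[ℂ] H, Ad t (a ∘L b) = Ad t a ∘L Ad t b) : adjoint t ∘L t = 1 := by
  obtain ⟨ht, ht'⟩ := ne_zero_and_adjoint_ne_zero_of_Ad_ne_zero hs
  refine (sub_eq_zero.mp (eq_zero_of_forall_comp_comp_comp_comp_eq_zero ht ht' fun a b ↦ ?_)).symm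
  rw [← Ad_comp_sub_comp_Ad, hmul, sub_self]

theorem Ad_one_ne_zero [Nontrivial H] {t : H →L[ℂ] H'} (ht : adjoint t ∘L t = 1) : Ad t 1 ≠ 0 := by
  have ht0 : t ≠ 0 := by
    rintro rfl
    simp at ht
  intro h
  apply ht0
  calc t = t ∘L (adjoint t ∘L t) := by rw [ht]; rfl
    _ = Ad t 1 ∘L t := rfl
    _ = 0 := by rw [h, zero_comp]

/-- If `Ad(t)` is multiplicative and nonzero then `t* t = 1`, i.e. `t` is an isometry.
Consequently (for nontrivial `H`), `Ad(t)` is a nonzero multiplicative (hence `*`-) map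
if and only if `t` is an isometry. -/
theorem stmt4 [Nontrivial H] (t : H →L[ℂ] H') :
    ((∀ a b : H →L[ℂ] H, Ad t (a.comp b) = (Ad t a).comp (Ad t b)) ∧ (∃ s, Ad t s ≠ 0))
      ↔ (ContinuousLinearMap.adjoint t).comp t = 1 :=
  ⟨fun ⟨hmul, _, hs⟩ ↦ adjoint_comp_self_eq_one_of_Ad_comp hs hmul,
    fun ht ↦ ⟨Ad_comp_of_adjoint_comp_self ht, 1, Ad_one_ne_zero ht⟩⟩
end

section
/- Let (tᵢ)_{i∈I} be a family of pairwise orthogonal bounded operators on a Hilbert space H (meaning tᵢ tⱼ* = tᵢ* tⱼ = 0 for i ≠ j) with sup_i ‖tᵢ‖ < ∞. Then for every J ⊆ I the sum Σ_{i∈J} tᵢ converges in the strong operator topology to a bounded operator t_J with ‖t_J‖ = sup_{i∈J} ‖tᵢ‖, and the map P(I) → B(H), J ↦ t_J, is continuous when P(I) ≅ {0,1}^I carries the product topology and B(H) the strong operator topology. -/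
open ContinuousLinearMap
open scoped ComplexInnerProductSpace

section Aux

variable {H : Type*} [NormedAddCommGroup H] [InnerProductSpace ℂ H] {I : Type*}

private lemma my_sq_le {a b : ℝ} (ha : 0 ≤ a) (hb : 0 ≤ b) (h : a ^ 2 ≤ b ^ 2) : a ≤ b := by
  nlinarith

private lemma my_norm_sum_sq (f : I → H) (F : Finset I)
    (h : ∀ i ∈ F, ∀ j ∈ F, i ≠ j → ⟪f i, f j⟫ = 0) :
    ‖∑ i ∈ F, f i‖ ^ 2 = ∑ i ∈ F, ‖f i‖ ^ 2 := by
  have key : ⟪∑ i ∈ F, f i, ∑ j ∈ F, f j⟫ = ∑ i ∈ F, (‖f i‖ : ℂ) ^ 2 := by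
    rw [sum_inner]
    refine Finset.sum_congr rfl fun i hi => ?_
    rw [inner_sum, Finset.sum_eq_single_of_mem i hi
      (fun j hj hji => h i hi j hj (Ne.symm hji)), inner_self_eq_norm_sq_to_K]
    norm_cast
  rw [inner_self_eq_norm_sq_to_K] at key
  have key2 : ((‖∑ i ∈ F, f i‖ ^ 2 : ℝ) : ℂ) = ((∑ i ∈ F, ‖f i‖ ^ 2 : ℝ) : ℂ) := by
    push_cast
    exact key
  exact_mod_cast key2

private lemma my_norm_le_of_hasSum {f : I → H} {x : H} (h : HasSum f x) {b : ℝ}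
    (hb : ∀ F : Finset I, ‖∑ i ∈ F, f i‖ ≤ b) : ‖x‖ ≤ b :=
  le_of_tendsto ((continuous_norm.tendsto x).comp h) (Filter.Eventually.of_forall hb)

private lemma my_summable_of_orth [CompleteSpace H] {f : I → H}
    (ho : ∀ i j, i ≠ j → ⟪f i, f j⟫ = 0) (hs : Summable fun i => ‖f i‖ ^ 2) :
    Summable f := by
  rw [summable_iff_vanishing]
  intro e he
  obtain ⟨ε, hε, hball⟩ := Metric.mem_nhds_iff.1 he
  obtain ⟨F, hF⟩ := hs.vanishing (Metric.ball_mem_nhds 0 (show (0:ℝ) < ε ^ 2 by positivity))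
  refine ⟨F, fun G hG => hball ?_⟩
  rw [Metric.mem_ball, dist_zero_right]
  have h1 : ‖∑ i ∈ G, f i‖ ^ 2 = ∑ i ∈ G, ‖f i‖ ^ 2 :=
    my_norm_sum_sq f G fun i _ j _ hij => ho i j hij
  have h2 := hF G hG
  rw [Metric.mem_ball, dist_zero_right, Real.norm_eq_abs] at h2
  have h3 : ∑ i ∈ G, ‖f i‖ ^ 2 < ε ^ 2 := lt_of_le_of_lt (le_abs_self _) h2
  nlinarith [norm_nonneg (∑ i ∈ G, f i)]

private lemma my_key_bound [CompleteSpace H] (t : I → H →L[ℂ] H) {c : ℝ} (hc : 0 ≤ c)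
    (hadj : ∀ i j, i ≠ j → ∀ u w : H, ⟪adjoint (t i) u, adjoint (t j) w⟫ = 0)
    (F : Finset I) (hF : ∀ i ∈ F, ‖t i‖ ≤ c) (v : H) :
    ∑ i ∈ F, ‖t i v‖ ^ 2 ≤ c ^ 2 * ‖v‖ ^ 2 := by
  set S : ℝ := ∑ i ∈ F, ‖t i v‖ ^ 2 with hS
  have hS0 : 0 ≤ S := Finset.sum_nonneg fun i _ => sq_nonneg _
  set w : H := ∑ i ∈ F, adjoint (t i) (t i v) with hw
  have h1 : ⟪v, w⟫ = (S : ℂ) := by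
    rw [hw, inner_sum, hS]
    push_cast
    refine Finset.sum_congr rfl fun i _ => ?_
    rw [adjoint_inner_right, inner_self_eq_norm_sq_to_K]
    norm_cast
  have h2 : S ≤ ‖v‖ * ‖w‖ := by
    have h := norm_inner_le_norm (𝕜 := ℂ) v w
    rw [h1] at h
    rwa [Complex.norm_real, Real.norm_eq_abs, abs_of_nonneg hS0] at h
  have h3 : ‖w‖ ^ 2 = ∑ i ∈ F, ‖adjoint (t i) (t i v)‖ ^ 2 :=
    my_norm_sum_sq _ F fun i _ j _ hij => hadj i j hij _ _
  have h4 : ‖w‖ ^ 2 ≤ c ^ 2 * S := by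
    rw [h3, hS, Finset.mul_sum]
    refine Finset.sum_le_sum fun i hi => ?_
    have ha : ‖adjoint (t i) (t i v)‖ ≤ c * ‖t i v‖ := by
      calc ‖adjoint (t i) (t i v)‖ ≤ ‖adjoint (t i)‖ * ‖t i v‖ := le_opNorm _ _
        _ ≤ c * ‖t i v‖ := by
            rw [LinearIsometryEquiv.norm_map]
            exact mul_le_mul_of_nonneg_right (hF i hi) (norm_nonneg _)
    calc ‖adjoint (t i) (t i v)‖ ^ 2 ≤ (c * ‖t i v‖) ^ 2 :=
          pow_le_pow_left₀ (norm_nonneg _) ha 2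
      _ = c ^ 2 * ‖t i v‖ ^ 2 := by ring
  have h5 : S * S ≤ (c ^ 2 * ‖v‖ ^ 2) * S := by
    have h6 : S * S ≤ (‖v‖ * ‖w‖) * (‖v‖ * ‖w‖) := mul_self_le_mul_self hS0 h2
    nlinarith [sq_nonneg ‖v‖, norm_nonneg w, norm_nonneg v]
  rcases hS0.eq_or_lt with h | h
  · rw [← h]; positivity
  · exact le_of_mul_le_mul_right h5 h

end Aux

/-- Let `(tᵢ)_{i∈I}` be a family of pairwise orthogonal bounded operators on a Hilbert space
(`tᵢ tⱼ* = tᵢ* tⱼ = 0` for `i ≠ j`) of uniformly bounded norm.  Then for every `J ⊆ I`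
(encoded as `J : I → Bool`) the sum `Σ_{i∈J} tᵢ` converges in the strong operator topology
to a bounded operator `t J` with `‖t J‖ = sup_{i∈J} ‖tᵢ‖`, and the map `J ↦ t J` is
continuous from `{0,1}^I` (product topology) to `B(H)` with the strong operator topology,
i.e. `J ↦ t J v` is continuous for every vector `v`. -/
theorem stmt5 {H : Type*} [NormedAddCommGroup H] [InnerProductSpace ℂ H] [CompleteSpace H]
    {I : Type*} (t : I → H →L[ℂ] H) (C : ℝ) (hC : ∀ i, ‖t i‖ ≤ C)
    (horth : ∀ i j, i ≠ j →
      (t i).comp (ContinuousLinearMap.adjoint (t j)) = 0 ∧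
      (ContinuousLinearMap.adjoint (t i)).comp (t j) = 0) :
    ∃ T : (I → Bool) → (H →L[ℂ] H),
      (∀ (J : I → Bool) (v : H), HasSum (fun i => if J i then t i v else 0) (T J v)) ∧
      (∀ J : I → Bool, ‖T J‖ = ⨆ i ∈ {i | J i = true}, ‖t i‖) ∧
      (∀ v : H, Continuous fun J : I → Bool => T J v) := by
  classical
  set C' := max C 0 with hC'def
  have hC'0 : 0 ≤ C' := le_max_right _ _
  have hC'i : ∀ i, ‖t i‖ ≤ C' := fun i => (hC i).trans (le_max_left _ _)
  -- vector-level orthogonality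
  have hov : ∀ i j, i ≠ j → ∀ u w : H, ⟪t i u, t j w⟫ = 0 := by
    intro i j hij u w
    have h0 : adjoint (t i) (t j w) = 0 := by
      have : adjoint (t i) (t j w) = ((adjoint (t i)).comp (t j)) w := rfl
      rw [this, (horth i j hij).2, ContinuousLinearMap.zero_apply]
    rw [← adjoint_inner_right, h0, inner_zero_right]
  have hoadj : ∀ i j, i ≠ j → ∀ u w : H, ⟪adjoint (t i) u, adjoint (t j) w⟫ = 0 := by
    intro i j hij u w
    have h0 : t i (adjoint (t j) w) = 0 := by
      have : t i (adjoint (t j) w) = ((t i).comp (adjoint (t j))) w := rfl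
      rw [this, (horth i j hij).1, ContinuousLinearMap.zero_apply]
    rw [adjoint_inner_left, h0, inner_zero_right]
  have hsummable_sq : ∀ v : H, Summable fun i => ‖t i v‖ ^ 2 := fun v =>
    summable_of_sum_le (fun i => sq_nonneg _)
      (fun F => my_key_bound t hC'0 hoadj F (fun i _ => hC'i i) v)
  have hgo : ∀ (J : I → Bool) (v : H) (i j : I), i ≠ j →
      ⟪(if J i then t i v else 0), (if J j then t j v else 0)⟫ = 0 := by
    intro J v i j hij
    split_ifs <;> simp [hov i j hij]
  have hgsum : ∀ (J : I → Bool) (v : H), Summable fun i => if J i then t i v else 0 := by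
    intro J v
    refine my_summable_of_orth (hgo J v) ?_
    refine Summable.of_nonneg_of_le (fun i => sq_nonneg _) ?_ (hsummable_sq v)
    intro i
    split_ifs <;> simp [sq_nonneg]
  -- partial sum bounds
  have hpartial : ∀ (J : I → Bool) (v : H) (c : ℝ), 0 ≤ c → (∀ i, J i = true → ‖t i‖ ≤ c) →
      ∀ F : Finset I, ‖∑ i ∈ F, (if J i then t i v else 0)‖ ≤ c * ‖v‖ := by
    intro J v c hc hJc F
    have h1 : ‖∑ i ∈ F, (if J i then t i v else 0)‖ ^ 2
        = ∑ i ∈ F, ‖if J i then t i v else 0‖ ^ 2 :=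
      my_norm_sum_sq _ F fun i _ j _ hij => hgo J v i j hij
    have h2 : ∑ i ∈ F, ‖if J i then t i v else 0‖ ^ 2
        = ∑ i ∈ F.filter (fun i => J i = true), ‖t i v‖ ^ 2 := by
      rw [Finset.sum_filter]
      refine Finset.sum_congr rfl fun i _ => ?_
      split_ifs <;> simp
    have h3 := my_key_bound t hc hoadj (F.filter (fun i => J i = true))
      (fun i hi => hJc i (Finset.mem_filter.1 hi).2) v
    refine my_sq_le (norm_nonneg _) (mul_nonneg hc (norm_nonneg _)) ?_
    rw [h1, h2]
    calc ∑ i ∈ F.filter (fun i => J i = true), ‖t i v‖ ^ 2 ≤ c ^ 2 * ‖v‖ ^ 2 := h3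
      _ = (c * ‖v‖) ^ 2 := by ring
  -- construct T
  have hT : ∀ J : I → Bool, ∃ TJ : H →L[ℂ] H,
      ∀ v : H, TJ v = ∑' i, (if J i then t i v else 0) := by
    intro J
    refine ⟨LinearMap.mkContinuous
      { toFun := fun v => ∑' i, (if J i then t i v else 0)
        map_add' := ?_
        map_smul' := ?_ } C' ?_, fun v => rfl⟩
    · intro u v
      have heq : (fun i => if J i then t i (u + v) else 0)
          = fun i => (if J i then t i u else 0) + (if J i then t i v else 0) := by
        funext i; split_ifs <;> simp
      simp only [heq]
      exact Summable.tsum_add (hgsum J u) (hgsum J v)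
    · intro c v
      have heq : (fun i => if J i then t i (c • v) else 0)
          = fun i => c • (if J i then t i v else 0) := by
        funext i; split_ifs <;> simp
      simp only [heq, RingHom.id_apply]
      exact Summable.tsum_const_smul c (hgsum J v)
    · intro v
      exact my_norm_le_of_hasSum (hgsum J v).hasSum
        (hpartial J v C' hC'0 fun i _ => hC'i i)
  choose T hTspec using hT
  have hHasSum : ∀ (J : I → Bool) (v : H),
      HasSum (fun i => if J i then t i v else 0) (T J v) := by
    intro J v
    rw [hTspec J v]
    exact (hgsum J v).hasSum
  refine ⟨T, hHasSum, ?_, ?_⟩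
  · -- norm identity
    intro J
    have hφbdd : ∀ i, (⨆ _ : i ∈ {i | J i = true}, ‖t i‖) ≤ C' := by
      intro i
      by_cases h : J i = true
      · simp only [Set.mem_setOf_eq]
        rw [ciSup_pos h]; exact hC'i i
      · simp only [Set.mem_setOf_eq]
        haveI : IsEmpty (J i = true) := ⟨fun hh => h hh⟩
        rw [Real.iSup_of_isEmpty]
        exact hC'0
    set s : ℝ := ⨆ i ∈ {i | J i = true}, ‖t i‖ with hs
    have hs0 : 0 ≤ s := Real.iSup_nonneg fun i => Real.iSup_nonneg fun _ => norm_nonneg _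
    refine le_antisymm ?_ ?_
    · -- ‖T J‖ ≤ s
      refine opNorm_le_bound _ hs0 fun v => ?_
      refine my_norm_le_of_hasSum (hHasSum J v) (hpartial J v s hs0 ?_)
      intro i hi
      have hbdd : BddAbove (Set.range fun i => ⨆ _ : i ∈ {i | J i = true}, ‖t i‖) :=
        ⟨C', by rintro x ⟨i, rfl⟩; exact hφbdd i⟩
      calc ‖t i‖ = ⨆ _ : i ∈ {i | J i = true}, ‖t i‖ := by
            simp only [Set.mem_setOf_eq]; rw [ciSup_pos hi]
        _ ≤ s := le_ciSup hbdd i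
    · -- s ≤ ‖T J‖
      have hlow : ∀ i, J i = true → ‖t i‖ ≤ ‖T J‖ := by
        intro i hi
        by_cases ht : t i = 0
        · simp [ht]
        · have hTadj : ∀ w : H, T J (adjoint (t i) w) = t i (adjoint (t i) w) := by
            intro w
            have h1 := hHasSum J (adjoint (t i) w)
            have h2 : HasSum (fun j => if J j then t j (adjoint (t i) w) else 0)
                (t i (adjoint (t i) w)) := by
              have heq : (fun j => if J j then t j (adjoint (t i) w) else 0)
                  = fun j => if j = i then t i (adjoint (t i) w) else 0 := by
                funext j
                by_cases hji : j = i
                · subst hji; simp [hi]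
                · have h0 : t j (adjoint (t i) w) = 0 := by
                    have : t j (adjoint (t i) w) = ((t j).comp (adjoint (t i))) w := rfl
                    rw [this, (horth j i hji).1, ContinuousLinearMap.zero_apply]
                  split_ifs <;> simp [h0, hji]
              rw [heq]
              exact hasSum_ite_eq i _
            exact h1.unique h2
          have hcomp : ‖(t i).comp (adjoint (t i))‖ ≤ ‖T J‖ * ‖t i‖ := by
            refine opNorm_le_bound _ (mul_nonneg (norm_nonneg _) (norm_nonneg _)) fun w => ?_
            have hcw : ((t i).comp (adjoint (t i))) w = T J (adjoint (t i) w) := by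
              rw [hTadj w]; rfl
            calc ‖((t i).comp (adjoint (t i))) w‖ = ‖T J (adjoint (t i) w)‖ := by
                  rw [hcw]
              _ ≤ ‖T J‖ * ‖adjoint (t i) w‖ := le_opNorm _ _
              _ ≤ ‖T J‖ * (‖adjoint (t i)‖ * ‖w‖) :=
                  mul_le_mul_of_nonneg_left (le_opNorm _ _) (norm_nonneg _)
              _ = ‖T J‖ * ‖t i‖ * ‖w‖ := by rw [LinearIsometryEquiv.norm_map]; ring
          have hnormcomp : ‖(t i).comp (adjoint (t i))‖ = ‖t i‖ * ‖t i‖ := by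
            have h := norm_adjoint_comp_self (adjoint (t i))
            rw [adjoint_adjoint] at h
            rw [LinearIsometryEquiv.norm_map] at h
            exact h
          have hpos : (0 : ℝ) < ‖t i‖ := norm_pos_iff.2 ht
          rw [hnormcomp] at hcomp
          exact le_of_mul_le_mul_right hcomp hpos
      refine Real.iSup_le (fun i => Real.iSup_le (fun hi => hlow i hi) (norm_nonneg _))
        (norm_nonneg _)
  · -- continuity
    intro v
    rw [continuous_iff_continuousAt]
    intro J₀
    rw [ContinuousAt, Metric.tendsto_nhds]
    intro ε hε
    obtain ⟨F, hF⟩ := (hsummable_sq v).vanishing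
      (Metric.ball_mem_nhds 0 (show (0:ℝ) < (ε / 2) ^ 2 by positivity))
    have hev : ∀ᶠ J : I → Bool in nhds J₀, ∀ i ∈ F, J i = J₀ i := by
      rw [Filter.eventually_all_finset]
      intro i _
      have hnb : ∀ᶠ b in nhds (J₀ i), b = J₀ i := by
        simp [nhds_discrete]
      exact ((continuous_apply i).tendsto J₀).eventually hnb
    filter_upwards [hev] with J hJ
    set d : I → H := fun i => (if J i then t i v else 0) - (if J₀ i then t i v else 0) with hd
    have hdsum : HasSum d (T J v - T J₀ v) := (hHasSum J v).sub (hHasSum J₀ v)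
    have hdo : ∀ i j, i ≠ j → ⟪d i, d j⟫ = 0 := by
      intro i j hij
      simp only [hd, inner_sub_left, inner_sub_right]
      split_ifs <;> simp [hov i j hij]
    have hdF : ∀ i ∈ F, d i = 0 := by
      intro i hi
      simp only [hd, hJ i hi, sub_self]
    have hdle : ∀ i, ‖d i‖ ^ 2 ≤ ‖t i v‖ ^ 2 := by
      intro i
      simp only [hd]
      split_ifs <;> simp [sq_nonneg]
    have hpart : ∀ G : Finset I, ‖∑ i ∈ G, d i‖ ≤ ε / 2 := by
      intro G
      have h1 : ‖∑ i ∈ G, d i‖ ^ 2 = ∑ i ∈ G, ‖d i‖ ^ 2 :=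
        my_norm_sum_sq d G fun i _ j _ hij => hdo i j hij
      have h2 : ∑ i ∈ G, ‖d i‖ ^ 2 = ∑ i ∈ G \ F, ‖d i‖ ^ 2 := by
        refine (Finset.sum_subset (Finset.sdiff_subset) fun i hG hni => ?_).symm
        have hiF : i ∈ F := by
          by_contra hc
          exact hni (Finset.mem_sdiff.2 ⟨hG, hc⟩)
        rw [hdF i hiF]
        simp
      have h3 : ∑ i ∈ G \ F, ‖d i‖ ^ 2 ≤ ∑ i ∈ G \ F, ‖t i v‖ ^ 2 :=
        Finset.sum_le_sum fun i _ => hdle i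
      have h4 := hF (G \ F) Finset.sdiff_disjoint
      rw [Metric.mem_ball, dist_zero_right, Real.norm_eq_abs] at h4
      have h5 : ∑ i ∈ G \ F, ‖t i v‖ ^ 2 ≤ (ε / 2) ^ 2 :=
        le_of_lt (lt_of_le_of_lt (le_abs_self _) h4)
      refine my_sq_le (norm_nonneg _) (by positivity) ?_
      rw [h1, h2]
      linarith
    rw [dist_eq_norm]
    have := my_norm_le_of_hasSum hdsum hpart
    linarith
end

section
/- A coarse structure E on a set X is induced by an extended pseudo-metric (i.e. E = E_d for some d : X × X → [0,∞]) if and only if E is countably generated, if and only if E contains a countable cofinal family of entourages (cofinal with respect to inclusion). -/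
open scoped ENNReal

/-- Composition of relations: `S ∘ R = {(x,z) | ∃ y, (x,y) ∈ S ∧ (y,z) ∈ R}`. -/
def relComp {X : Type*} (S R : Set (X × X)) : Set (X × X) :=
  {p | ∃ y, (p.1, y) ∈ S ∧ (y, p.2) ∈ R}

/-- Transposition of a relation. -/
def relOp {X : Type*} (R : Set (X × X)) : Set (X × X) := {p | (p.2, p.1) ∈ R}

/-- A coarse structure on a set `X`: a family of relations on `X` closed under subsets and
finite unions, containing the diagonal, and closed under transposition and composition. -/
structure CoarseStructure (X : Type*) where
  ents : Set (Set (X × X))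
  mem_of_subset : ∀ {E F : Set (X × X)}, E ∈ ents → F ⊆ E → F ∈ ents
  union_mem : ∀ {E F : Set (X × X)}, E ∈ ents → F ∈ ents → E ∪ F ∈ ents
  diag_mem : {p : X × X | p.1 = p.2} ∈ ents
  op_mem : ∀ {E : Set (X × X)}, E ∈ ents → relOp E ∈ ents
  comp_mem : ∀ {E F : Set (X × X)}, E ∈ ents → F ∈ ents → relComp E F ∈ ents

/-- An extended pseudo-metric on `X` (values in `[0,∞]`). -/
structure ExtPseudoMetric (X : Type*) where
  d : X → X → ℝ≥0∞
  refl : ∀ x, d x x = 0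
  symm : ∀ x y, d x y = d y x
  triangle : ∀ x y z, d x z ≤ d x y + d y z

/-- The coarse structure induced by an extended pseudo-metric: the entourages are the
relations on which `d` is bounded by some finite `r`. -/
def inducedByMetric {X : Type*} (ρ : ExtPseudoMetric X) (𝓔 : CoarseStructure X) : Prop :=
  𝓔.ents = {E | ∃ r : ℝ≥0∞, r < ⊤ ∧ ∀ p ∈ E, ρ.d p.1 p.2 < r}

/-- `𝓔` is countably generated: it is the smallest coarse structure containing a given
countable family of relations. -/
def CountablyGenerated {X : Type*} (𝓔 : CoarseStructure X) : Prop :=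
  ∃ S : Set (Set (X × X)), S.Countable ∧ S ⊆ 𝓔.ents ∧
    ∀ 𝓕 : CoarseStructure X, S ⊆ 𝓕.ents → 𝓔.ents ⊆ 𝓕.ents

/-- `𝓔` contains a countable cofinal family of entourages (w.r.t. inclusion). -/
def HasCountableCofinal {X : Type*} (𝓔 : CoarseStructure X) : Prop :=
  ∃ f : ℕ → Set (X × X), (∀ n, f n ∈ 𝓔.ents) ∧ ∀ E ∈ 𝓔.ents, ∃ n, E ⊆ f n



/-!
Given a cofinal sequence `f n` of entourages, symmetrize and square repeatedly:
`S n = genScale f n`, where `S 0` is the diagonal and `S (n+1)` is the symmetrization of `S n ∘ S n ∪ f n`. Every `S n` is an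
entourage and every entourage lies in some `S n`. The level `d x y = min {n | (x, y) ∈ S n}`
(`∞` if there is none) is already an extended pseudo-metric: if `d x y = a` and `d y z = b` are
both positive then `(x, z) ∈ S (max a b + 1)` and `max a b + 1 ≤ a + b`, while level `0` forces
equality. Its bounded relations are exactly those contained in some `S n`. Conversely the balls
`{d < n}` of a metric form a countable cofinal family, and the sets `S n` built from an enumeration
of a generating family show that a countably generated structure has one.
-/

section Scales

variable {X : Type*}

def genScale (f : ℕ → Set (X × X)) : ℕ → Set (X × X)
  | 0 => {p | p.1 = p.2}
  | n + 1 => (relComp (genScale f n) (genScale f n) ∪ f n) ∪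
      relOp (relComp (genScale f n) (genScale f n) ∪ f n)

variable (f : ℕ → Set (X × X))

lemma mem_genScale_comm {n : ℕ} {x y : X} :
    (x, y) ∈ genScale f n ↔ (y, x) ∈ genScale f n := by
  cases n with
  | zero => exact eq_comm
  | succ n => exact or_comm

lemma relComp_genScale_subset (n : ℕ) :
    relComp (genScale f n) (genScale f n) ⊆ genScale f (n + 1) :=
  fun _ hp => Or.inl (Or.inl hp)

lemma subset_genScale_succ (n : ℕ) : f n ⊆ genScale f (n + 1) :=
  fun _ hp => Or.inl (Or.inr hp)

lemma diag_subset_genScale (n : ℕ) : {p : X × X | p.1 = p.2} ⊆ genScale f n := by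
  induction n with
  | zero => exact subset_rfl
  | succ n ih =>
    rintro ⟨x, _⟩ (rfl : x = _)
    exact relComp_genScale_subset f n ⟨x, ih rfl, ih rfl⟩

lemma genScale_mono : Monotone (genScale f) :=
  monotone_nat_of_le_succ fun n p hp =>
    relComp_genScale_subset f n ⟨p.2, hp, diag_subset_genScale f n rfl⟩

noncomputable def levelDist (x y : X) : ℝ≥0∞ :=
  ⨅ (n : ℕ) (_ : (x, y) ∈ genScale f n), (n : ℝ≥0∞)

lemma levelDist_le {x y : X} {n : ℕ} (h : (x, y) ∈ genScale f n) : levelDist f x y ≤ n :=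
  iInf₂_le n h

lemma mem_genScale_of_levelDist_lt {x y : X} {n : ℕ} (h : levelDist f x y < n) :
    (x, y) ∈ genScale f n := by
  obtain ⟨m, hm, hmn⟩ := by simpa only [levelDist, iInf_lt_iff] using h
  exact genScale_mono f (by exact_mod_cast hmn.le) hm

lemma levelDist_le_add_of_mem {x y z : X} {a b : ℕ} (hxy : (x, y) ∈ genScale f a)
    (hyz : (y, z) ∈ genScale f b) : levelDist f x z ≤ a + b := by
  rcases Nat.eq_zero_or_pos a with rfl | ha
  · obtain rfl : x = y := hxy
    simpa using levelDist_le f hyz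
  rcases Nat.eq_zero_or_pos b with rfl | hb
  · obtain rfl : y = z := hyz
    simpa using levelDist_le f hxy
  calc levelDist f x z ≤ (max a b + 1 : ℕ) :=
        levelDist_le f <| relComp_genScale_subset f _
          ⟨y, genScale_mono f (le_max_left a b) hxy, genScale_mono f (le_max_right a b) hyz⟩
    _ ≤ a + b := by exact_mod_cast (by omega : max a b + 1 ≤ a + b)

noncomputable def levelMetric : ExtPseudoMetric X where
  d := levelDist f
  refl x := nonpos_iff_eq_zero.1 <| by simpa using levelDist_le f (n := 0) (x := x) rfl
  symm x y := by simp only [levelDist, mem_genScale_comm f (x := x)]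
  triangle x y z := by
    conv_rhs => rw [levelDist, levelDist]
    simp only [ENNReal.iInf_add, ENNReal.add_iInf]
    exact le_iInf₂ fun b hyz => le_iInf₂ fun a hxy => levelDist_le_add_of_mem f hxy hyz

lemma exists_subset_genScale_iff (E : Set (X × X)) :
    (∃ n, E ⊆ genScale f n) ↔ ∃ r < ⊤, ∀ p ∈ E, levelDist f p.1 p.2 < r := by
  constructor
  · rintro ⟨n, hn⟩
    refine ⟨(n + 1 : ℕ), ENNReal.natCast_lt_top _, fun p hp => ?_⟩
    exact (levelDist_le f (hn hp)).trans_lt (by exact_mod_cast n.lt_succ_self)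
  · rintro ⟨r, hr, hE⟩
    obtain ⟨n, hn⟩ := ENNReal.exists_nat_gt hr.ne
    exact ⟨n, fun p hp => mem_genScale_of_levelDist_lt f ((hE p hp).trans hn)⟩

end Scales

namespace CoarseStructure

variable {X : Type*}

def ofGenScale (f : ℕ → Set (X × X)) : CoarseStructure X where
  ents := {E | ∃ n, E ⊆ genScale f n}
  mem_of_subset := fun ⟨n, hE⟩ hFE => ⟨n, hFE.trans hE⟩
  union_mem := fun ⟨m, hE⟩ ⟨n, hF⟩ =>
    ⟨max m n, Set.union_subset (hE.trans (genScale_mono f (le_max_left m n)))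
      (hF.trans (genScale_mono f (le_max_right m n)))⟩
  diag_mem := ⟨0, subset_rfl⟩
  op_mem := fun ⟨n, hE⟩ => ⟨n, fun _ hp => (mem_genScale_comm f).1 (hE hp)⟩
  comp_mem := fun ⟨m, hE⟩ ⟨n, hF⟩ =>
    ⟨max m n + 1, fun _ ⟨y, hxy, hyz⟩ => relComp_genScale_subset f _
      ⟨y, genScale_mono f (le_max_left m n) (hE hxy), genScale_mono f (le_max_right m n) (hF hyz)⟩⟩

variable (𝓔 : CoarseStructure X)

lemma genScale_mem {f : ℕ → Set (X × X)} (hf : ∀ n, f n ∈ 𝓔.ents) (n : ℕ) :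
    genScale f n ∈ 𝓔.ents := by
  induction n with
  | zero => exact 𝓔.diag_mem
  | succ n ih =>
    have h := 𝓔.union_mem (𝓔.comp_mem ih ih) (hf n)
    exact 𝓔.union_mem h (𝓔.op_mem h)

lemma ents_eq_ofGenScale {f : ℕ → Set (X × X)} (hf : ∀ n, f n ∈ 𝓔.ents)
    (hcof : ∀ E ∈ 𝓔.ents, ∃ n, E ⊆ f n) : 𝓔.ents = (ofGenScale f).ents := by
  ext E
  constructor
  · intro hE
    obtain ⟨n, hn⟩ := hcof E hE
    exact ⟨n + 1, hn.trans (subset_genScale_succ f n)⟩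
  · rintro ⟨n, hn⟩
    exact 𝓔.mem_of_subset (𝓔.genScale_mem hf n) hn

lemma inducedByMetric_levelMetric {f : ℕ → Set (X × X)} (hf : ∀ n, f n ∈ 𝓔.ents)
    (hcof : ∀ E ∈ 𝓔.ents, ∃ n, E ⊆ f n) : inducedByMetric (levelMetric f) 𝓔 := by
  rw [inducedByMetric, 𝓔.ents_eq_ofGenScale hf hcof]
  ext E
  exact exists_subset_genScale_iff f E

lemma hasCountableCofinal_of_inducedByMetric {ρ : ExtPseudoMetric X}
    (h : inducedByMetric ρ 𝓔) : HasCountableCofinal 𝓔 := by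
  refine ⟨fun n => {p | ρ.d p.1 p.2 < n}, fun n => ?_, fun E hE => ?_⟩
  · rw [h]
    exact ⟨n, ENNReal.natCast_lt_top n, fun _ hp => hp⟩
  · rw [h] at hE
    obtain ⟨r, hr, hd⟩ := hE
    obtain ⟨n, hn⟩ := ENNReal.exists_nat_gt hr.ne
    exact ⟨n, fun p hp => (hd p hp).trans hn⟩

lemma countablyGenerated_of_hasCountableCofinal (h : HasCountableCofinal 𝓔) :
    CountablyGenerated 𝓔 := by
  obtain ⟨f, hf, hcof⟩ := h
  refine ⟨Set.range f, Set.countable_range f, Set.range_subset_iff.2 hf, fun 𝓕 hf𝓕 E hE => ?_⟩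
  obtain ⟨n, hn⟩ := hcof E hE
  exact 𝓕.mem_of_subset (hf𝓕 (Set.mem_range_self n)) hn

lemma hasCountableCofinal_of_countablyGenerated (h : CountablyGenerated 𝓔) :
    HasCountableCofinal 𝓔 := by
  obtain ⟨S, hS, hS𝓔, hmin⟩ := h
  obtain ⟨g, hg⟩ :=
    (hS.insert {p : X × X | p.1 = p.2}).exists_eq_range (Set.insert_nonempty _ _)
  have hg𝓔 : ∀ n, g n ∈ 𝓔.ents := fun n =>
    Set.insert_subset 𝓔.diag_mem hS𝓔 (hg ▸ Set.mem_range_self n)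
  have hSg : S ⊆ (ofGenScale g).ents := fun s hs => by
    obtain ⟨n, rfl⟩ : s ∈ Set.range g := hg ▸ Set.mem_insert_of_mem _ hs
    exact ⟨n + 1, subset_genScale_succ g n⟩
  exact ⟨genScale g, 𝓔.genScale_mem hg𝓔, hmin _ hSg⟩

end CoarseStructure

/-- A coarse structure is induced by an extended pseudo-metric iff it is countably
generated, iff it contains a countable cofinal family of entourages. -/
theorem stmt7 {X : Type*} (𝓔 : CoarseStructure X) :
    ((∃ ρ : ExtPseudoMetric X, inducedByMetric ρ 𝓔) ↔ CountablyGenerated 𝓔) ∧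
    (CountablyGenerated 𝓔 ↔ HasCountableCofinal 𝓔) := by
  have metric_iff : (∃ ρ : ExtPseudoMetric X, inducedByMetric ρ 𝓔) ↔ HasCountableCofinal 𝓔 :=
    ⟨fun ⟨_, hρ⟩ => 𝓔.hasCountableCofinal_of_inducedByMetric hρ,
      fun ⟨f, hf, hcof⟩ => ⟨levelMetric f, 𝓔.inducedByMetric_levelMetric hf hcof⟩⟩
  have cg_iff : CountablyGenerated 𝓔 ↔ HasCountableCofinal 𝓔 :=
    ⟨𝓔.hasCountableCofinal_of_countablyGenerated, 𝓔.countablyGenerated_of_hasCountableCofinal⟩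
  exact ⟨metric_iff.trans cg_iff.symm, cg_iff⟩
end

section
/- Let φ : A → B(H') be a *-homomorphism, where A ≤ B(H) is a *-algebra, and let B ≤ B(H') be a C*-algebra containing all finite-rank operators on H' as well as φ(A). If φ(A) is a hereditary subalgebra of B, then φ maps operators of rank at most 1 to operators of rank at most 1. -/
/-!
A rank-one operator satisfies `a a⋆ a = ‖a‖² a`, so `e = ‖a‖⁻² a⋆ a` is a star projection of
rank at most one in `A` with `a e = a`; having rank one, it satisfies `e T e ∈ ℂ e` for every `T`.
Hence `p = φ e` is a star projection with `φ a = φ a p`, and it suffices to bound the rank of `p`.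
For a unit vector `w` in the range of `p`, the projection `q` onto `ℂ w` is of finite rank and
satisfies `0 ≤ q ≤ p`, so heredity gives `q = φ b`; then `q = p q p = φ (e b e) ∈ ℂ p`, which
forces `p = q`.
-/

open ContinuousLinearMap InnerProductSpace

theorem Module.End.exists_mul_mul_eq_smul_of_rank_le_one {K V : Type*} [Field K]
    [AddCommGroup V] [Module K V] {e : Module.End K V} (he : e.rank ≤ 1) (T : Module.End K V) :
    ∃ c : K, e * T * e = c • e := by
  obtain ⟨v, hv⟩ := rank_le_one_iff.mp he
  obtain ⟨c, hc⟩ := hv ⟨e (T v), LinearMap.mem_range_self e _⟩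
  refine ⟨c, LinearMap.ext fun x => ?_⟩
  obtain ⟨r, hr⟩ := hv ⟨e x, LinearMap.mem_range_self e x⟩
  have hc' : c • (v : V) = e (T v) := congrArg Subtype.val hc
  have hr' : r • (v : V) = e x := congrArg Subtype.val hr
  simp only [Module.End.mul_apply, LinearMap.smul_apply, ← hr', map_smul, ← hc', smul_comm r c]

theorem isStarProjection_inv_smul_star_mul_self {𝕜 R : Type*} [Field 𝕜] [StarRing 𝕜]
    [NonUnitalRing R] [StarRing R] [Module 𝕜 R] [StarModule 𝕜 R] [IsScalarTower 𝕜 R R]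
    [SMulCommClass 𝕜 R R] {a : R} {c : 𝕜} (hc : IsSelfAdjoint c)
    (h : a * star a * a = c • a) : IsStarProjection (c⁻¹ • (star a * a)) := by
  refine ⟨?_, ?_⟩
  · rcases eq_or_ne c 0 with rfl | hc0
    · simp [IsIdempotentElem]
    have hsq : star a * a * (star a * a) = c • (star a * a) := by
      rw [← mul_smul_comm, ← h]
      simp only [mul_assoc]
    rw [IsIdempotentElem, smul_mul_smul_comm, hsq, smul_smul, mul_assoc, inv_mul_cancel₀ hc0,
      mul_one]
  · rw [IsSelfAdjoint, star_smul, star_mul, star_star, star_inv₀, hc.star_eq]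

theorem mul_inv_smul_star_mul_self {𝕜 R : Type*} [Field 𝕜] [NonUnitalRing R] [StarRing R]
    [Module 𝕜 R] [SMulCommClass 𝕜 R R] {a : R} {c : 𝕜} (hc : c ≠ 0)
    (h : a * star a * a = c • a) : a * (c⁻¹ • (star a * a)) = a := by
  rw [mul_smul_comm, ← mul_assoc, h, smul_smul, inv_mul_cancel₀ hc, one_smul]

namespace ContinuousLinearMap

variable {𝕜 E F : Type*} [RCLike 𝕜]
  [NormedAddCommGroup E] [InnerProductSpace 𝕜 E] [NormedAddCommGroup F] [InnerProductSpace 𝕜 F]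

theorem exists_eq_rankOne_of_rank_le_one [CompleteSpace E] [CompleteSpace F] {a : E →L[𝕜] F}
    (ha : (a : E →ₗ[𝕜] F).rank ≤ 1) : ∃ u v, a = rankOne 𝕜 u v := by
  obtain ⟨⟨u, _⟩, hu⟩ := rank_le_one_iff.mp ha
  refine ⟨((‖u‖ : 𝕜) ^ 2)⁻¹ • u, adjoint a u, ext fun x => ?_⟩
  obtain ⟨r, hr⟩ := hu ⟨a x, LinearMap.mem_range_self _ x⟩
  have hr' : r • u = a x := congrArg Subtype.val hr
  rcases eq_or_ne u 0 with rfl | hu0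
  · simp [← hr']
  have : (‖u‖ : 𝕜) ≠ 0 := by simpa using hu0
  rw [rankOne_apply, adjoint_inner_left, ← hr', inner_smul_right, inner_self_eq_norm_sq_to_K,
    smul_smul]
  field_simp

theorem comp_adjoint_comp_self_of_rank_le_one [CompleteSpace E] [CompleteSpace F]
    {a : E →L[𝕜] F} (ha : (a : E →ₗ[𝕜] F).rank ≤ 1) :
    a ∘L adjoint a ∘L a = ((‖a‖ ^ 2 : ℝ) : 𝕜) • a := by
  obtain ⟨u, v, rfl⟩ := exists_eq_rankOne_of_rank_le_one ha
  simp only [adjoint_rankOne, rankOne_comp_rankOne, comp_smul, smul_smul,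
    inner_self_eq_norm_sq_to_K, norm_rankOne]
  push_cast
  ring_nf

theorem exists_isStarProjection_smul_star_mul_self [CompleteSpace E] {a : E →L[𝕜] E}
    (ha : (a : E →ₗ[𝕜] E).rank ≤ 1) :
    ∃ c : 𝕜, IsStarProjection (c • (star a * a)) ∧ a * (c • (star a * a)) = a := by
  have h : a * star a * a = ((‖a‖ ^ 2 : ℝ) : 𝕜) • a := by
    simpa [star_eq_adjoint, mul_def, comp_assoc] using comp_adjoint_comp_self_of_rank_le_one ha
  refine ⟨_, isStarProjection_inv_smul_star_mul_self (by simp [IsSelfAdjoint]) h, ?_⟩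
  rcases eq_or_ne a 0 with rfl | ha0
  · simp
  · exact mul_inv_smul_star_mul_self (by simpa using ha0) h

end ContinuousLinearMap

theorem IsIdempotentElem.rank_le_one_of_rankOne_eq_smul {𝕜 E : Type*} [RCLike 𝕜]
    [NormedAddCommGroup E] [InnerProductSpace 𝕜 E] {p : E →L[𝕜] E} (hp : IsIdempotentElem p)
    (h : ∀ w, ‖w‖ = 1 → p w = w → ∃ μ : 𝕜, rankOne 𝕜 w w = μ • p) :
    (p : E →ₗ[𝕜] E).rank ≤ 1 := by
  rcases eq_or_ne p 0 with rfl | hp0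
  · simp
  obtain ⟨x, hx⟩ : ∃ x, p x ≠ 0 := by
    by_contra! h0
    exact hp0 (ext h0)
  set w := (‖p x‖ : 𝕜)⁻¹ • p x
  have hw : ‖w‖ = 1 := by simp [w, norm_smul, hx]
  have hw0 : w ≠ 0 := norm_ne_zero_iff.mp (by simp [hw])
  have hpw : p w = w := by rw [map_smul, ← mul_apply_eq_comp, hp.eq]
  obtain ⟨μ, hμ⟩ := h w hw hpw
  have hμ1 : μ = 1 := by
    have := congr($hμ w)
    simp only [rankOne_apply, inner_self_eq_norm_sq_to_K, hw, smul_apply, hpw] at this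
    exact smul_left_injective 𝕜 hw0 (by simpa using this.symm)
  rw [← one_smul 𝕜 p, ← hμ1, ← hμ, rank_rankOne hw0 hw0]

theorem NonUnitalStarSubalgebra.exists_isStarProjection_mul_eq_self_of_rank_le_one
    {𝕜 E : Type*} [RCLike 𝕜] [NormedAddCommGroup E] [InnerProductSpace 𝕜 E] [CompleteSpace E]
    {A : NonUnitalStarSubalgebra 𝕜 (E →L[𝕜] E)} {a : A}
    (ha : ((a : E →L[𝕜] E) : E →ₗ[𝕜] E).rank ≤ 1) :
    ∃ e : A, IsStarProjection e ∧ ((e : E →L[𝕜] E) : E →ₗ[𝕜] E).rank ≤ 1 ∧ a * e = a := by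
  obtain ⟨c, he, hae⟩ := exists_isStarProjection_smul_star_mul_self ha
  refine ⟨c • (star a * a), ⟨Subtype.ext he.isIdempotentElem.eq,
    Subtype.ext he.isSelfAdjoint.star_eq⟩, ?_, Subtype.ext hae⟩
  rw [show ((c • (star a * a) : A) : E →L[𝕜] E) = (c • star (a : E →L[𝕜] E)) * a from
    (smul_mul_assoc ..).symm]
  exact (LinearMap.rank_comp_le_right _ _).trans ha

theorem exists_eq_smul_map_of_rank_le_one {𝕜 E R F : Type*} [RCLike 𝕜]
    [NormedAddCommGroup E] [InnerProductSpace 𝕜 E] [CompleteSpace E]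
    {A : NonUnitalStarSubalgebra 𝕜 (E →L[𝕜] E)} [NonUnitalRing R] [Module 𝕜 R]
    [FunLike F A R] [NonUnitalAlgHomClass F 𝕜 A R] (φ : F) {e : A}
    (he : ((e : E →L[𝕜] E) : E →ₗ[𝕜] E).rank ≤ 1) {q : R} (hq : q ∈ Set.range φ)
    (hqe : φ e * q * φ e = q) : ∃ μ : 𝕜, q = μ • φ e := by
  obtain ⟨a, rfl⟩ := hq
  obtain ⟨μ, hμ⟩ := Module.End.exists_mul_mul_eq_smul_of_rank_le_one he (a : E →L[𝕜] E)
  have heae : e * a * e = μ • e := Subtype.ext (ext fun x => LinearMap.congr_fun hμ x)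
  exact ⟨μ, by rw [← hqe, ← map_mul, ← map_mul, heae, map_smul]⟩

variable {H H' : Type*}
  [NormedAddCommGroup H] [InnerProductSpace ℂ H] [CompleteSpace H]
  [NormedAddCommGroup H'] [InnerProductSpace ℂ H'] [CompleteSpace H']

theorem stmt18_general (A : NonUnitalStarSubalgebra ℂ (H →L[ℂ] H))
    (φ : A →⋆ₙₐ[ℂ] (H' →L[ℂ] H'))
    (B : NonUnitalStarSubalgebra ℂ (H' →L[ℂ] H'))
    (hBfin : ∀ t : H' →L[ℂ] H',
      FiniteDimensional ℂ (LinearMap.range (t : H' →ₗ[ℂ] H')) → t ∈ B)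
    (hher : ∀ b : H' →L[ℂ] H', b ∈ B → b.IsPositive →
      (∃ a : A, (φ a).IsPositive ∧ ((φ a) - b).IsPositive) → b ∈ Set.range φ) :
    ∀ a : A, LinearMap.rank ((a : H →L[ℂ] H) : H →ₗ[ℂ] H) ≤ 1 →
      LinearMap.rank ((φ a : H' →L[ℂ] H') : H' →ₗ[ℂ] H') ≤ 1 := by
  intro a ha
  obtain ⟨e, he, he_rank, hae⟩ :=
    NonUnitalStarSubalgebra.exists_isStarProjection_mul_eq_self_of_rank_le_one ha
  have hp : IsStarProjection (φ e) := he.map φ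
  rw [← hae, map_mul]
  refine (LinearMap.rank_comp_le_right _ _).trans
    (hp.isIdempotentElem.rank_le_one_of_rankOne_eq_smul fun w hw hpw => ?_)
  have hw0 : w ≠ 0 := norm_ne_zero_iff.mp (by simp [hw])
  have hq : IsStarProjection (rankOne ℂ w w) := isStarProjection_rankOne_self hw
  have hpq : φ e * rankOne ℂ w w = rankOne ℂ w w := by rw [mul_def, comp_rankOne, hpw]
  have hqp : rankOne ℂ w w * φ e = rankOne ℂ w w := by
    rw [mul_def, rankOne_comp, ← star_eq_adjoint, hp.isSelfAdjoint.star_eq, hpw]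
  have hq_range : rankOne ℂ w w ∈ Set.range φ :=
    hher _ (hBfin _ (.of_rank_eq_one (rank_rankOne hw0 hw0))) (.of_isStarProjection hq)
      ⟨e, .of_isStarProjection hp, .of_isStarProjection (hq.sub_of_mul_eq_right hp hpq)⟩
  exact exists_eq_smul_map_of_rank_le_one φ he_rank hq_range (by rw [hpq, hqp])

/-- Let `φ : A → B(H')` be a `*`-homomorphism from a `*`-subalgebra `A ≤ B(H)`, and let
`B ≤ B(H')` be a C*-algebra (closed `*`-subalgebra) containing all finite-rank operators
on `H'` as well as `φ(A)`.  If `φ(A)` is a hereditary subalgebra of `B`, then `φ` maps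
operators of rank at most 1 to operators of rank at most 1. -/
theorem stmt18 (A : NonUnitalStarSubalgebra ℂ (H →L[ℂ] H))
    (φ : A →⋆ₙₐ[ℂ] (H' →L[ℂ] H'))
    (B : NonUnitalStarSubalgebra ℂ (H' →L[ℂ] H'))
    (hBclosed : IsClosed (B : Set (H' →L[ℂ] H')))
    (hBfin : ∀ t : H' →L[ℂ] H',
      FiniteDimensional ℂ (LinearMap.range (t : H' →ₗ[ℂ] H')) → t ∈ B)
    (hφB : ∀ a : A, φ a ∈ B)
    (hher : ∀ b : H' →L[ℂ] H', b ∈ B → b.IsPositive →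
      (∃ a : A, (φ a).IsPositive ∧ ((φ a) - b).IsPositive) → b ∈ Set.range φ) :
    ∀ a : A, LinearMap.rank ((a : H →L[ℂ] H) : H →ₗ[ℂ] H) ≤ 1 →
      LinearMap.rank ((φ a : H' →L[ℂ] H') : H' →ₗ[ℂ] H') ≤ 1 :=
  stmt18_general A φ B hBfin hher
end

section
/- Every nonzero *-homomorphism φ : F(H) → B(H') from the finite-rank operators on a Hilbert space H which maps operators of rank at most 1 to operators of rank at most 1 is spatially implemented by an isometry: there exists an isometry W : H → H' such that φ(t) = W t W* for all t ∈ F(H). -/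
/-!
Fix a unit vector `e ∈ H` and put `p = |e⟩⟨e|`. Since `φ p` is a projection of rank at most one,
and is nonzero because `|a⟩⟨b| = |a⟩⟨e| p |e⟩⟨b|` and every finite-rank operator is a sum of
rank-one ones, `φ p = |f⟩⟨f|` for a unit vector `f ∈ H'`. The map `W x = φ(|x⟩⟨e|) f` is
isometric because `φ(|e⟩⟨x|) φ(|y⟩⟨e|) = ⟪x, y⟫ φ p`, and the same factorization gives
`φ(|a⟩⟨b|) = |W a⟩⟨W b| = W |a⟩⟨b| W*`.
-/
open ContinuousLinearMap

variable {H H' : Type*}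
  [NormedAddCommGroup H] [InnerProductSpace ℂ H] [CompleteSpace H]
  [NormedAddCommGroup H'] [InnerProductSpace ℂ H'] [CompleteSpace H']

/-- `t` is a finite-rank operator. -/
def FinRank (t : H →L[ℂ] H) : Prop :=
  FiniteDimensional ℂ (LinearMap.range (t : H →ₗ[ℂ] H))

open InnerProductSpace

section RankOne

variable {𝕜 E F : Type*} [RCLike 𝕜] [NormedAddCommGroup E] [InnerProductSpace 𝕜 E]
  [CompleteSpace E] [NormedAddCommGroup F] [InnerProductSpace 𝕜 F] [CompleteSpace F]

lemma comp_rankOne_comp_adjoint (W : E →L[𝕜] F) (x y : E) :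
    (W ∘L rankOne 𝕜 x y) ∘L adjoint W = rankOne 𝕜 (W x) (W y) := by
  rw [comp_rankOne, rankOne_comp, adjoint_adjoint]

lemma IsStarProjection.exists_eq_rankOne_self {q : E →L[𝕜] E} (hq : IsStarProjection q)
    (hrank : LinearMap.rank (q : E →ₗ[𝕜] E) ≤ 1) (hq0 : q ≠ 0) :
    ∃ f : E, ‖f‖ = 1 ∧ q = rankOne 𝕜 f f := by
  obtain ⟨K, _, rfl⟩ := isStarProjection_iff_eq_starProjection.mp hq
  rw [LinearMap.rank, Submodule.range_starProjection,
    Submodule.rank_le_one_iff_isPrincipal] at hrank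
  obtain ⟨g, rfl⟩ := hrank
  have hg0 : g ≠ 0 := by
    rintro rfl
    exact hq0 (by simp)
  set f := (‖g‖⁻¹ : 𝕜) • g
  have hf : ‖f‖ = 1 := by simp [f, norm_smul, hg0]
  have hspan : 𝕜 ∙ g = 𝕜 ∙ f := (Submodule.span_singleton_smul_eq (by simpa using hg0) g).symm
  refine ⟨f, hf, ?_⟩
  ext v
  simp only [hspan]
  exact Submodule.starProjection_unit_singleton 𝕜 hf v

end RankOne

section FinRank

variable {E : Type*} [NormedAddCommGroup E] [InnerProductSpace ℂ E]

lemma finRank_zero : FinRank (0 : E →L[ℂ] E) := by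
  rw [FinRank, toLinearMap_zero, LinearMap.range_zero]
  infer_instance

lemma FinRank.add {s t : E →L[ℂ] E} (hs : FinRank s) (ht : FinRank t) : FinRank (s + t) :=
  have : FiniteDimensional ℂ _ := hs
  have : FiniteDimensional ℂ _ := ht
  Submodule.finiteDimensional_of_le (LinearMap.range_add_le (s : E →ₗ[ℂ] E) t)

lemma finRank_rankOne (x y : E) : FinRank (rankOne ℂ x y) := by
  refine Submodule.finiteDimensional_of_le (S₂ := ℂ ∙ x) ?_
  rintro _ ⟨v, rfl⟩
  exact Submodule.smul_mem _ _ (Submodule.mem_span_singleton_self x)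

lemma finRank_sum {ι : Type*} (s : Finset ι) {t : ι → E →L[ℂ] E} (ht : ∀ i ∈ s, FinRank (t i)) :
    FinRank (∑ i ∈ s, t i) := by
  classical
  induction s using Finset.induction with
  | empty => simpa using finRank_zero
  | insert i s hi ih =>
    rw [Finset.sum_insert hi]
    exact (ht i (s.mem_insert_self i)).add (ih fun j hj ↦ ht j (Finset.mem_insert_of_mem hj))

lemma FinRank.exists_eq_sum_rankOne [CompleteSpace E] {t : E →L[ℂ] E} (ht : FinRank t) :
    ∃ (n : ℕ) (x y : Fin n → E), t = ∑ i, rankOne ℂ (x i) (y i) := by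
  have : FiniteDimensional ℂ _ := ht
  set V := LinearMap.range (t : E →ₗ[ℂ] E)
  let b := stdOrthonormalBasis ℂ V
  have ht_eq : t = V.starProjection ∘L t := by
    ext v
    exact (Submodule.starProjection_eq_self_iff.mpr (LinearMap.mem_range_self _ v)).symm
  refine ⟨_, fun i ↦ b i, fun i ↦ adjoint t (b i), ?_⟩
  nth_rw 1 [ht_eq]
  rw [b.starProjection_eq_sum_rankOne, finsetSum_comp]
  simp only [rankOne_comp]

end FinRank

structure IsStarHomOnFinRank (φ : (H →L[ℂ] H) → (H' →L[ℂ] H')) : Prop where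
  map_add : ∀ s t, FinRank s → FinRank t → φ (s + t) = φ s + φ t
  map_smul : ∀ (c : ℂ) t, FinRank t → φ (c • t) = c • φ t
  map_comp : ∀ s t, FinRank s → FinRank t → φ (s ∘L t) = φ s ∘L φ t
  map_adjoint : ∀ t, FinRank t → φ (adjoint t) = adjoint (φ t)

namespace IsStarHomOnFinRank

variable {φ : (H →L[ℂ] H) → (H' →L[ℂ] H')}

lemma map_zero (hφ : IsStarHomOnFinRank φ) : φ 0 = 0 := by
  simpa using hφ.map_add 0 0 finRank_zero finRank_zero

lemma map_sum (hφ : IsStarHomOnFinRank φ) {ι : Type*} (s : Finset ι) {t : ι → H →L[ℂ] H}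
    (ht : ∀ i ∈ s, FinRank (t i)) : φ (∑ i ∈ s, t i) = ∑ i ∈ s, φ (t i) := by
  classical
  induction s using Finset.induction with
  | empty => simpa using hφ.map_zero
  | insert i s hi ih =>
    have hts : ∀ j ∈ s, FinRank (t j) := fun j hj ↦ ht j (Finset.mem_insert_of_mem hj)
    rw [Finset.sum_insert hi, Finset.sum_insert hi,
      hφ.map_add _ _ (ht i (s.mem_insert_self i)) (finRank_sum s hts), ih hts]

lemma isStarProjection_map (hφ : IsStarHomOnFinRank φ) {p : H →L[ℂ] H} (hp : FinRank p)
    (hproj : IsStarProjection p) : IsStarProjection (φ p) where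
  isIdempotentElem := by
    rw [IsIdempotentElem, mul_def, ← hφ.map_comp p p hp hp, ← mul_def, hproj.isIdempotentElem.eq]
  isSelfAdjoint := by
    rw [IsSelfAdjoint, star_eq_adjoint, ← hφ.map_adjoint p hp, ← star_eq_adjoint,
      hproj.isSelfAdjoint.star_eq]

lemma map_rankOne_eq_comp (hφ : IsStarHomOnFinRank φ) {e : H} (he : ‖e‖ = 1) (a b : H) :
    φ (rankOne ℂ a b) = φ (rankOne ℂ a e) ∘L φ (rankOne ℂ e e) ∘L φ (rankOne ℂ e b) := by
  have hee : inner ℂ e e = 1 := by simp [he]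
  have hcomp (x y : H) : rankOne ℂ x e ∘L rankOne ℂ e y = rankOne ℂ x y := by
    rw [rankOne_comp_rankOne, hee, one_smul]
  rw [← hφ.map_comp _ _ (finRank_rankOne e e) (finRank_rankOne e b), hcomp,
    ← hφ.map_comp _ _ (finRank_rankOne a e) (finRank_rankOne e b), hcomp]

lemma map_eq_zero_of_map_rankOne_self_eq_zero (hφ : IsStarHomOnFinRank φ) {e : H} (he : ‖e‖ = 1)
    (h0 : φ (rankOne ℂ e e) = 0) {t : H →L[ℂ] H} (ht : FinRank t) : φ t = 0 := by
  obtain ⟨n, x, y, rfl⟩ := ht.exists_eq_sum_rankOne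
  rw [hφ.map_sum _ fun i _ ↦ finRank_rankOne (x i) (y i)]
  refine Finset.sum_eq_zero fun i _ ↦ ?_
  rw [hφ.map_rankOne_eq_comp he, h0, zero_comp, comp_zero]

lemma adjoint_map_rankOne (hφ : IsStarHomOnFinRank φ) (x y : H) :
    adjoint (φ (rankOne ℂ x y)) = φ (rankOne ℂ y x) := by
  rw [← hφ.map_adjoint _ (finRank_rankOne x y), adjoint_rankOne]

noncomputable def spatialMap (hφ : IsStarHomOnFinRank φ) (e : H) (f : H') : H →ₗ[ℂ] H' where
  toFun x := φ (rankOne ℂ x e) f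
  map_add' x y := by
    rw [_root_.map_add, add_apply, hφ.map_add _ _ (finRank_rankOne x e) (finRank_rankOne y e),
      add_apply]
  map_smul' c x := by
    rw [_root_.map_smul, smul_apply, hφ.map_smul _ _ (finRank_rankOne x e), smul_apply,
      RingHom.id_apply]

lemma inner_spatialMap (hφ : IsStarHomOnFinRank φ) {e : H} {f : H'}
    (hf : φ (rankOne ℂ e e) = rankOne ℂ f f) (hf1 : ‖f‖ = 1) (x y : H) :
    inner ℂ (hφ.spatialMap e f x) (hφ.spatialMap e f y) = inner ℂ x y :=
  calc inner ℂ (φ (rankOne ℂ x e) f) (φ (rankOne ℂ y e) f)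
      = inner ℂ f ((φ (rankOne ℂ e x) ∘L φ (rankOne ℂ y e)) f) := by
        rw [← adjoint_inner_right, hφ.adjoint_map_rankOne, comp_apply]
    _ = inner ℂ f ((inner ℂ x y • φ (rankOne ℂ e e)) f) := by
        rw [← hφ.map_comp _ _ (finRank_rankOne e x) (finRank_rankOne y e), rankOne_comp_rankOne,
          hφ.map_smul _ _ (finRank_rankOne e e)]
    _ = inner ℂ x y := by simp [hf, hf1]

lemma map_rankOne_eq_rankOne_spatialMap (hφ : IsStarHomOnFinRank φ) {e : H} {f : H'}
    (he : ‖e‖ = 1) (hf : φ (rankOne ℂ e e) = rankOne ℂ f f) (a b : H) :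
    φ (rankOne ℂ a b) = rankOne ℂ (hφ.spatialMap e f a) (hφ.spatialMap e f b) := by
  rw [hφ.map_rankOne_eq_comp he, hf, rankOne_comp, comp_rankOne, hφ.adjoint_map_rankOne]
  rfl

lemma map_eq_comp_comp_adjoint (hφ : IsStarHomOnFinRank φ) {W : H →L[ℂ] H'}
    (hW : ∀ a b, φ (rankOne ℂ a b) = rankOne ℂ (W a) (W b)) {t : H →L[ℂ] H} (ht : FinRank t) :
    φ t = (W ∘L t) ∘L adjoint W := by
  obtain ⟨n, x, y, rfl⟩ := ht.exists_eq_sum_rankOne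
  rw [hφ.map_sum _ fun i _ ↦ finRank_rankOne (x i) (y i), comp_finsetSum, finsetSum_comp]
  simp only [hW, comp_rankOne_comp_adjoint]

end IsStarHomOnFinRank

/-- Every nonzero `*`-homomorphism `φ : F(H) → B(H')` from the finite-rank operators on a
Hilbert space `H` which maps operators of rank at most 1 to operators of rank at most 1 is
spatially implemented by an isometry `W : H → H'`: `φ(t) = W t W*` for all `t ∈ F(H)`.
Here `φ` is encoded as a map on `B(H)` which is linear, multiplicative and `*`-preserving
on the `*`-algebra of finite-rank operators. -/
theorem stmt19 (φ : (H →L[ℂ] H) → (H' →L[ℂ] H'))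
    (hadd : ∀ s t : H →L[ℂ] H, FinRank s → FinRank t → φ (s + t) = φ s + φ t)
    (hsmul : ∀ (c : ℂ) (t : H →L[ℂ] H), FinRank t → φ (c • t) = c • φ t)
    (hmul : ∀ s t : H →L[ℂ] H, FinRank s → FinRank t → φ (s.comp t) = (φ s).comp (φ t))
    (hstar : ∀ t : H →L[ℂ] H, FinRank t →
      φ (ContinuousLinearMap.adjoint t) = ContinuousLinearMap.adjoint (φ t))
    (hnonzero : ∃ t : H →L[ℂ] H, FinRank t ∧ φ t ≠ 0)
    (hrank1 : ∀ t : H →L[ℂ] H, LinearMap.rank (t : H →ₗ[ℂ] H) ≤ 1 →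
      LinearMap.rank ((φ t : H' →L[ℂ] H') : H' →ₗ[ℂ] H') ≤ 1) :
    ∃ W : H →L[ℂ] H',
      (ContinuousLinearMap.adjoint W).comp W = 1 ∧
      ∀ t : H →L[ℂ] H, FinRank t →
        φ t = (W.comp t).comp (ContinuousLinearMap.adjoint W) := by
  have hφ : IsStarHomOnFinRank φ := ⟨hadd, hsmul, hmul, hstar⟩
  obtain ⟨t₀, ht₀, hφt₀⟩ := hnonzero
  have : Nontrivial H := by
    obtain ⟨x, hx⟩ := DFunLike.ne_iff.mp fun h : t₀ = 0 ↦ hφt₀ (h ▸ hφ.map_zero)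
    exact nontrivial_of_ne x 0 fun h ↦ hx (by simp [h])
  obtain ⟨e, he⟩ := exists_norm_eq H zero_le_one
  have hp : IsStarProjection (φ (rankOne ℂ e e)) :=
    hφ.isStarProjection_map (finRank_rankOne e e) (isStarProjection_rankOne_self he)
  have he0 : e ≠ 0 := norm_ne_zero_iff.mp (by simp [he])
  obtain ⟨f, hf1, hf⟩ := hp.exists_eq_rankOne_self (hrank1 _ (rank_rankOne he0 he0).le)
    fun h ↦ hφt₀ (hφ.map_eq_zero_of_map_rankOne_self_eq_zero he h ht₀)
  let W : H →ₗᵢ[ℂ] H' := (hφ.spatialMap e f).isometryOfInner (hφ.inner_spatialMap hf hf1)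
  exact ⟨W.toContinuousLinearMap, W.adjoint_comp_self, fun t ht ↦
    hφ.map_eq_comp_comp_adjoint (W := W.toContinuousLinearMap)
      (hφ.map_rankOne_eq_rankOne_spatialMap he hf) ht⟩
end
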